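/- arXiv:0907.0045 — 3 statements merged into one kernel-verified Lean document; each statement's English description precedes it below -/
import Mathlib

section
/- For every real x > 0, tanh² x > x²/(1+x²) and x²/(1+x²) > sech²(1/x). -/
theorem tanh_sq_gt_sech_sq (x : ℝ) (hx : 0 < x) :
    Real.tanh x ^ 2 > x^2 / (1 + x^2) ∧
    x^2 / (1 + x^2) > (1 / Real.cosh (1/x))^2 := by
  have hs : x < Real.sinh x := Real.self_lt_sinh_iff.mpr hx
  have hc : 0 < Real.cosh x := Real.cosh_pos _
  have hcs : Real.cosh x ^ 2 = Real.sinh x ^ 2 + 1 := Real.cosh_sq x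
  constructor
  · rw [Real.tanh_eq_sinh_div_cosh, div_pow, gt_iff_lt,
      div_lt_div_iff₀ (by positivity) (by positivity)]
    nlinarith [sq_nonneg x]
  · have hx' : 0 < 1/x := by positivity
    have hs' : 1/x < Real.sinh (1/x) := Real.self_lt_sinh_iff.mpr hx'
    have hc' : 0 < Real.cosh (1/x) := Real.cosh_pos _
    have hcs' : Real.cosh (1/x) ^ 2 = Real.sinh (1/x) ^ 2 + 1 := Real.cosh_sq _
    rw [gt_iff_lt, div_pow, one_pow, div_lt_div_iff₀ (by positivity) (by positivity)]
    have h1 : 1 + (1/x)^2 < Real.cosh (1/x)^2 := by nlinarith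
    have hxx : (1/x)^2 = 1/x^2 := by rw [div_pow, one_pow]
    rw [hxx] at h1
    have h2 : x^2 * (1 + 1/x^2) = 1 + x^2 := by field_simp; ring
    have := mul_lt_mul_of_pos_left h1 (by positivity : (0:ℝ) < x^2)
    linarith
end

section
/- Let θ : ℝ → ℝ be continuous and nonnegative, and let a : [x₁, x₂] → ℝ be differentiable with a(x) ≥ 1 for all x and a'(x) ≤ θ(x) √(a(x)² − 1) on [x₁,x₂]. Then arcosh(a(x₂)) − arcosh(a(x₁)) ≤ ∫_{x₁}^{x₂} θ(x) dx; in particular if a(x₁) = 1 then a(x₂) ≤ cosh(∫_{x₁}^{x₂} θ dx). -/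
/-!
Compare `a` with `cosh ∘ u`, where `u` solves `u' = θ + ε` with `u(x₁) = arcosh (a x₁) + ε`.
At a first touching point `a = cosh u > 1`, so `√(a² - 1) = sinh u > 0` and
`a' ≤ θ sinh u < u' sinh u = (cosh ∘ u)'`; hence `a` stays below `cosh ∘ u`.
Letting `ε → 0` gives `a x₂ ≤ cosh (arcosh (a x₁) + ∫ θ)`, and `arcosh` is monotone.
The perturbation is needed because `arcosh` is not differentiable at `1`.
-/

noncomputable def arcosh (x : ℝ) : ℝ := Real.log (x + Real.sqrt (x^2 - 1))

open Set Filter Topology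

theorem arcosh_eq_real_arcosh : arcosh = Real.arcosh := rfl

theorem sqrt_cosh_sq_sub_one {t : ℝ} (ht : 0 ≤ t) : √(Real.cosh t ^ 2 - 1) = Real.sinh t := by
  rw [← Real.sinh_arcosh (Real.one_le_cosh t), Real.arcosh_cosh ht]

theorem le_cosh_comp_of_deriv_le_mul_sqrt {θ a a' u u' : ℝ → ℝ} {x₁ x₂ : ℝ}
    (ha : ∀ x ∈ Icc x₁ x₂, HasDerivAt a (a' x) x)
    (hineq : ∀ x ∈ Ico x₁ x₂, a' x ≤ θ x * √(a x ^ 2 - 1))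
    (hu : ∀ x ∈ Icc x₁ x₂, HasDerivAt u (u' x) x)
    (hu_pos : ∀ x ∈ Ico x₁ x₂, 0 < u x)
    (hθu : ∀ x ∈ Ico x₁ x₂, θ x < u' x)
    (h₁ : a x₁ ≤ Real.cosh (u x₁)) :
    ∀ x ∈ Icc x₁ x₂, a x ≤ Real.cosh (u x) := by
  have hB : ∀ x ∈ Icc x₁ x₂, HasDerivAt (fun y => Real.cosh (u y)) (Real.sinh (u x) * u' x) x :=
    fun x hx => (Real.hasDerivAt_cosh (u x)).comp x (hu x hx)
  refine image_le_of_deriv_right_lt_deriv_boundary'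
    (fun x hx => (ha x hx).continuousAt.continuousWithinAt)
    (fun x hx => (ha x (Ico_subset_Icc_self hx)).hasDerivWithinAt) h₁
    (fun x hx => (hB x hx).continuousAt.continuousWithinAt)
    (fun x hx => (hB x (Ico_subset_Icc_self hx)).hasDerivWithinAt) ?_
  intro x hx htouch
  have hsinh : 0 < Real.sinh (u x) := Real.sinh_pos_iff.mpr (hu_pos x hx)
  calc a' x ≤ θ x * √(a x ^ 2 - 1) := hineq x hx
    _ = θ x * Real.sinh (u x) := by rw [htouch, sqrt_cosh_sq_sub_one (hu_pos x hx).le]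
    _ < u' x * Real.sinh (u x) := mul_lt_mul_of_pos_right (hθu x hx) hsinh
    _ = Real.sinh (u x) * u' x := mul_comm _ _

theorem le_cosh_arcosh_add_integral {θ a a' : ℝ → ℝ} {x₁ x₂ : ℝ} (hx : x₁ ≤ x₂)
    (hθc : Continuous θ) (hθ0 : ∀ x ∈ Icc x₁ x₂, 0 ≤ θ x)
    (hderiv : ∀ x ∈ Icc x₁ x₂, HasDerivAt a (a' x) x) (ha₁ : 1 ≤ a x₁)
    (hineq : ∀ x ∈ Ico x₁ x₂, a' x ≤ θ x * √(a x ^ 2 - 1)) :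
    a x₂ ≤ Real.cosh (Real.arcosh (a x₁) + ∫ x in x₁..x₂, θ x) := by
  set c := Real.arcosh (a x₁) + ∫ x in x₁..x₂, θ x
  have hc₀ : 0 ≤ Real.arcosh (a x₁) := Real.arcosh_nonneg ha₁
  have hperturbed : ∀ ε > 0, a x₂ ≤ Real.cosh (c + ε * (x₂ - x₁ + 1)) := by
    intro ε hε
    let u x := Real.arcosh (a x₁) + (∫ t in x₁..x, θ t) + ε * (x - x₁ + 1)
    have hu : ∀ x, HasDerivAt u (θ x + ε) x := fun x =>
      ((hθc.integral_hasStrictDerivAt x₁ x).hasDerivAt.const_add _).add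
        (by simpa using (((hasDerivAt_id x).sub_const x₁).add_const 1).const_mul ε)
    have hu_pos : ∀ x ∈ Ico x₁ x₂, 0 < u x := fun x hx' => by
      have : 0 ≤ ∫ t in x₁..x, θ t := intervalIntegral.integral_nonneg hx'.1
        fun t ht => hθ0 t ⟨ht.1, ht.2.trans hx'.2.le⟩
      have := mul_pos hε (by linarith [hx'.1] : 0 < x - x₁ + 1)
      linarith
    have h₁ : a x₁ ≤ Real.cosh (u x₁) := by
      calc a x₁ = Real.cosh (Real.arcosh (a x₁)) := (Real.cosh_arcosh ha₁).symm
        _ ≤ Real.cosh (Real.arcosh (a x₁) + ε) := by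
          rw [Real.cosh_le_cosh, abs_of_nonneg hc₀, abs_of_nonneg (by linarith)]
          linarith
        _ = Real.cosh (u x₁) := by simp [u]
    simpa [u, c, add_assoc] using le_cosh_comp_of_deriv_le_mul_sqrt
      hderiv hineq (fun x _ => hu x) hu_pos
      (fun x _ => lt_add_of_pos_right _ hε) h₁ x₂ ⟨hx, le_rfl⟩
  have hlim : Tendsto (fun ε => Real.cosh (c + ε * (x₂ - x₁ + 1))) (𝓝[>] 0)
      (𝓝 (Real.cosh c)) := by
    have : Continuous fun ε => Real.cosh (c + ε * (x₂ - x₁ + 1)) := by fun_prop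
    simpa using (this.tendsto 0).mono_left nhdsWithin_le_nhds
  exact ge_of_tendsto hlim (eventually_nhdsWithin_of_forall hperturbed)

theorem gronwall_arcosh_bound (θ : ℝ → ℝ) (a a' : ℝ → ℝ) (x₁ x₂ : ℝ)
    (hx : x₁ ≤ x₂)
    (hθc : Continuous θ) (hθ0 : ∀ x, 0 ≤ θ x)
    (hderiv : ∀ x ∈ Set.Icc x₁ x₂, HasDerivAt a (a' x) x)
    (ha1 : ∀ x ∈ Set.Icc x₁ x₂, 1 ≤ a x)
    (hineq : ∀ x ∈ Set.Icc x₁ x₂, a' x ≤ θ x * Real.sqrt ((a x)^2 - 1)) :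
    arcosh (a x₂) - arcosh (a x₁) ≤ ∫ x in x₁..x₂, θ x ∧
    (a x₁ = 1 → a x₂ ≤ Real.cosh (∫ x in x₁..x₂, θ x)) := by
  rw [arcosh_eq_real_arcosh]
  have ha₁ : 1 ≤ a x₁ := ha1 x₁ ⟨le_rfl, hx⟩
  have hbound := le_cosh_arcosh_add_integral hx hθc (fun x _ => hθ0 x) hderiv ha₁
    fun x hx' => hineq x (Ico_subset_Icc_self hx')
  have hc₀ : 0 ≤ Real.arcosh (a x₁) + ∫ x in x₁..x₂, θ x :=
    add_nonneg (Real.arcosh_nonneg ha₁) (intervalIntegral.integral_nonneg hx fun x _ => hθ0 x)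
  refine ⟨?_, fun h₁ => by simpa [h₁] using hbound⟩
  have := (Real.arcosh_le_arcosh (by linarith [ha1 x₂ ⟨hx, le_rfl⟩])
    (Real.cosh_pos _)).mpr hbound
  rw [Real.arcosh_cosh hc₀] at this
  linarith
end

section
/- For the Regge–Wheeler potential V(r) = (1 − 2m/r)[ℓ(ℓ+1)/r² + 2m(1−s²)/r³] of a Schwarzschild black hole, with m > 0 and integers 0 ≤ s ≤ ℓ, the integral of V with respect to the tortoise coordinate equals ∫_{2m}^{∞} [ℓ(ℓ+1)/r² + 2m(1−s²)/r³] dr = (2ℓ(ℓ+1) + (1−s²))/(4m). Consequently the greybody bound T ≥ sech²{(1/(2ω))∫V dr*} takes the explicit form T ≥ sech²{(2ℓ(ℓ+1) + 1 − s²)/(8ωm)}. -/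
open MeasureTheory Set

lemma one_div_pow_eq_rpow_neg (r : ℝ) (n : ℕ) : 1 / r ^ n = r ^ (-(n : ℝ)) := by
  rw [Real.rpow_neg_natCast, zpow_neg, zpow_natCast, one_div]

lemma integrableOn_Ioi_one_div_pow {c : ℝ} (hc : 0 < c) {n : ℕ} (hn : 1 < n) :
    IntegrableOn (fun r : ℝ ↦ 1 / r ^ n) (Ioi c) := by
  simp_rw [one_div_pow_eq_rpow_neg]
  exact integrableOn_Ioi_rpow_of_lt (neg_lt_neg (by exact_mod_cast hn)) hc

lemma integral_Ioi_one_div_pow_add_two {c : ℝ} (hc : 0 < c) (n : ℕ) :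
    ∫ r in Ioi c, 1 / r ^ (n + 2) = 1 / ((n + 1) * c ^ (n + 1)) := by
  have hexp : -((n + 2 : ℕ) : ℝ) + 1 = -((n + 1 : ℕ) : ℝ) := by push_cast; ring
  simp_rw [one_div_pow_eq_rpow_neg]
  rw [integral_Ioi_rpow_of_lt (by push_cast; linarith) hc, hexp, ← one_div_pow_eq_rpow_neg]
  push_cast
  field_simp

lemma integral_Ioi_div_sq_add_div_cube {c : ℝ} (hc : 0 < c) (a b : ℝ) :
    ∫ r in Ioi c, (a / r ^ 2 + b / r ^ 3) = a / c + b / (2 * c ^ 2) := by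
  have hsq : ∫ r in Ioi c, 1 / r ^ 2 = 1 / c := by
    simpa using integral_Ioi_one_div_pow_add_two hc 0
  have hcube : ∫ r in Ioi c, 1 / r ^ 3 = 1 / (2 * c ^ 2) := by
    simpa [one_add_one_eq_two] using integral_Ioi_one_div_pow_add_two hc 1
  simp_rw [div_eq_mul_one_div a, div_eq_mul_one_div b]
  rw [integral_add ((integrableOn_Ioi_one_div_pow hc one_lt_two).const_mul a)
      ((integrableOn_Ioi_one_div_pow hc (by norm_num)).const_mul b),
    integral_const_mul, integral_const_mul, hsq, hcube]

theorem regge_wheeler_integral_general (m ω T : ℝ) (hm : 0 < m)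
    (s ℓ : ℕ)
    (hT : T ≥ (1 / Real.cosh ((1/(2*ω)) *
      ∫ r in Set.Ioi (2*m),
        ((ℓ * (ℓ + 1) : ℝ) / r^2 + 2*m*(1 - (s:ℝ)^2) / r^3)))^2) :
    (∫ r in Set.Ioi (2*m),
        ((ℓ * (ℓ + 1) : ℝ) / r^2 + 2*m*(1 - (s:ℝ)^2) / r^3))
      = (2 * (ℓ * (ℓ + 1) : ℝ) + (1 - (s:ℝ)^2)) / (4*m) ∧
    T ≥ (1 / Real.cosh ((2 * (ℓ * (ℓ + 1) : ℝ) + 1 - (s:ℝ)^2) / (8*ω*m)))^2 := by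
  have hI : (∫ r in Set.Ioi (2*m),
        ((ℓ * (ℓ + 1) : ℝ) / r^2 + 2*m*(1 - (s:ℝ)^2) / r^3))
      = (2 * (ℓ * (ℓ + 1) : ℝ) + (1 - (s:ℝ)^2)) / (4*m) := by
    rw [integral_Ioi_div_sq_add_div_cube (by positivity)]
    field_simp
    ring
  refine ⟨hI, ?_⟩
  convert hT using 4
  rw [hI]
  ring

theorem regge_wheeler_integral (m ω T : ℝ) (hm : 0 < m) (hω : 0 < ω)
    (s ℓ : ℕ) (hs : s ≤ ℓ)
    (hT : T ≥ (1 / Real.cosh ((1/(2*ω)) *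
      ∫ r in Set.Ioi (2*m),
        ((ℓ * (ℓ + 1) : ℝ) / r^2 + 2*m*(1 - (s:ℝ)^2) / r^3)))^2) :
    (∫ r in Set.Ioi (2*m),
        ((ℓ * (ℓ + 1) : ℝ) / r^2 + 2*m*(1 - (s:ℝ)^2) / r^3))
      = (2 * (ℓ * (ℓ + 1) : ℝ) + (1 - (s:ℝ)^2)) / (4*m) ∧
    T ≥ (1 / Real.cosh ((2 * (ℓ * (ℓ + 1) : ℝ) + 1 - (s:ℝ)^2) / (8*ω*m)))^2 :=
  regge_wheeler_integral_general m ω T hm s ℓ hT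
end
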